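/- Let π be a permutation of {1,…,n} and k ≥ 0. If π contains no forbidden pattern of order k, then ssc(π) ≤ k. -/

import Mathlib

/-- The largest letter of a word (`0` for the empty word). -/
def listMax (l : List ℕ) : ℕ := l.foldr max 0

lemma listMax_mem {l : List ℕ} (h : l ≠ []) : listMax l ∈ l := by
  induction l with
  | nil => simp at h
  | cons a t ih =>
    rcases eq_or_ne t [] with rfl | ht
    · simp [listMax]
    · have ht' := ih ht
      have hcons : listMax (a :: t) = max a (listMax t) := rfl
      rcases le_total a (listMax t) with hle | hle
      · rw [hcons, max_eq_right hle]; exact List.mem_cons_of_mem _ ht'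
      · rw [hcons, max_eq_left hle]; exact List.mem_cons_self

/-- The stack-sorting operator `S`: `S` of the empty word is the empty word, and
if `π` is nonempty, writing `π = L·m·R` where `m` is the greatest letter of `π`,
then `S(π) = S(L)·S(R)·m`. -/
def stackSort : List ℕ → List ℕ
  | [] => []
  | x :: xs =>
    stackSort ((x :: xs).take ((x :: xs).idxOf (listMax (x :: xs)))) ++
      stackSort ((x :: xs).drop ((x :: xs).idxOf (listMax (x :: xs)) + 1)) ++
      [listMax (x :: xs)]
termination_by l => l.length
decreasing_by
  · have hm : listMax (x :: xs) ∈ x :: xs := listMax_mem (by simp)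
    have hi : (x :: xs).idxOf (listMax (x :: xs)) < (x :: xs).length :=
      List.idxOf_lt_length_iff.mpr hm
    simp only [List.length_take, List.length_cons] at *
    omega
  · simp only [List.length_drop, List.length_cons]
    omega

/-- `π` is a permutation of `{1, …, n}`, viewed as a word containing each of
`1, …, n` exactly once. -/
def IsPermWord (n : ℕ) (π : List ℕ) : Prop := π.Perm (List.range' 1 n)

/-- The stack-sorting complexity of `π`: the least `k ≥ 0` such that `S^k(π)`
is the identity word `1, 2, …, n` (where `n` is the length of `π`). -/
noncomputable def ssc (π : List ℕ) : ℕ :=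
  sInf {k : ℕ | stackSort^[k] π = List.range' 1 π.length}

/-- `π` contains a forbidden pattern of order `k`: a triple `(B, c, a)` where
`B` is a set of `k` entries of `π` and `c`, `a` are entries of `π` such that
for every `b ∈ B` the subsequence `b, c, a` occurs in that order in `π` and
satisfies `a < b < c` (an occurrence of the pattern `231`). -/
def HasForbiddenPattern (π : List ℕ) (k : ℕ) : Prop :=
  ∃ (B : Finset ℕ) (c a : ℕ), B.card = k ∧ (∀ b ∈ B, b ∈ π) ∧ c ∈ π ∧ a ∈ π ∧
    ∀ b ∈ B, a < b ∧ b < c ∧ ([b, c, a] : List ℕ).Sublist π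

/-!
If `S^k(π)` is not the identity, it has an inversion `c, a`. An inversion `c, a` of `S(σ)`
comes from an inversion `c', a` of `σ` with `c < c'` and `c, c', a` a subsequence of `σ`:
`c'` is the maximum of the smallest block of the recursion of `S` that contains both `c`
and `a`. Moreover every letter preceding `c` in `S(σ)` precedes `c'` in `σ`. Pulling the
inversion back through the `k` applications of `S`, and adding the current `c` to `B` at
each step, yields a forbidden pattern `(B, c, a)` of order `k` in `π`.
-/

namespace List

variable {α : Type*} {x y : α} {l t u v : List α}

theorem Sublist.of_cons_append_of_notMem (h : x :: t <+ u ++ v) (hx : x ∉ u) : x :: t <+ v := by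
  induction u with
  | nil => exact h
  | cons a u ih =>
    rw [mem_cons, not_or] at hx
    rcases sublist_cons_iff.1 h with h | ⟨r, hr, -⟩
    · exact ih h hx.2
    · exact absurd (cons.inj hr).1 hx.1

theorem Sublist.pair_of_append_of_notMem (h : [x, y] <+ u ++ v) (hy : y ∉ v) : [x, y] <+ u := by
  have h' : [y, x] <+ v.reverse ++ u.reverse := by simpa using h.reverse
  simpa using (h'.of_cons_append_of_notMem (by simpa using hy)).reverse

theorem Nodup.triple_sublist {z : α} (hl : l.Nodup) (hxy : [x, y] <+ l) (hyz : [y, z] <+ l) :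
    [x, y, z] <+ l := by
  obtain ⟨r₁, r₂, rfl, hx, hy⟩ := cons_sublist_iff.1 hxy
  have hy₁ : y ∉ r₁ := fun hy₁ => disjoint_of_nodup_append hl hy₁ (singleton_sublist.1 hy)
  exact (singleton_sublist.2 hx).append (hyz.of_cons_append_of_notMem hy₁)

end List

open List

theorem listMax_le_iff {l : List ℕ} {m : ℕ} : listMax l ≤ m ↔ ∀ x ∈ l, x ≤ m := by
  induction l with
  | nil => simp [listMax]
  | cons a t ih => simp [listMax, ← ih]

theorem le_listMax {l : List ℕ} {x : ℕ} (h : x ∈ l) : x ≤ listMax l :=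
  listMax_le_iff.1 le_rfl x h

theorem stackSort_append_cons {L R : List ℕ} {m : ℕ} (hL : ∀ x ∈ L, x < m)
    (hR : ∀ x ∈ R, x ≤ m) :
    stackSort (L ++ m :: R) = stackSort L ++ stackSort R ++ [m] := by
  have hmL : m ∉ L := fun h => (hL m h).false
  have hmax : listMax (L ++ m :: R) = m := by
    refine le_antisymm (listMax_le_iff.2 fun x hx => ?_) (le_listMax (by simp))
    rcases mem_append.1 hx with hx | hx
    · exact (hL x hx).le
    · rcases mem_cons.1 hx with rfl | hx
      exacts [le_rfl, hR x hx]
  have hidx : (L ++ m :: R).idxOf m = L.length := by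
    simp [idxOf_append_of_notMem hmL]
  obtain ⟨x, xs, hxs⟩ := exists_cons_of_ne_nil (by simp : L ++ m :: R ≠ [])
  rw [hxs, stackSort, ← hxs, hmax, hidx]
  simp

theorem stackSort_induction {P : List ℕ → Prop} (nil : P [])
    (split : ∀ L m R, (∀ x ∈ L, x < m) → (∀ x ∈ R, x ≤ m) → P L → P R → P (L ++ m :: R))
    (l : List ℕ) : P l := by
  induction h : l.length using Nat.strong_induction_on generalizing l with
  | _ n ih =>
  rcases eq_or_ne l [] with rfl | hl
  · exact nil
  obtain ⟨L, R, hLR, hmL⟩ := eq_append_cons_of_mem (listMax_mem hl)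
  have hle : ∀ x ∈ L ++ listMax l :: R, x ≤ listMax l := fun x hx => le_listMax (hLR ▸ hx)
  have hlen : L.length < n ∧ R.length < n := by
    subst h; rw [hLR]; simp only [length_append, length_cons]; omega
  rw [hLR]
  refine split L _ R (fun x hx => lt_of_le_of_ne (hle x (by simp [hx])) ?_)
    (fun x hx => hle x (by simp [hx])) (ih _ hlen.1 L rfl) (ih _ hlen.2 R rfl)
  rintro rfl
  exact hmL hx

theorem stackSort_perm (l : List ℕ) : (stackSort l).Perm l := by
  induction l using stackSort_induction with
  | nil => simp [stackSort]
  | split L m R hL hR ihL ihR =>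
    rw [stackSort_append_cons hL hR]
    refine ((ihL.append ihR).append_right [m]).trans ?_
    rw [append_assoc]
    exact (perm_append_singleton m R).append_left L

theorem mem_stackSort {l : List ℕ} {x : ℕ} : x ∈ stackSort l ↔ x ∈ l :=
  (stackSort_perm l).mem_iff

section Split

variable {L R : List ℕ} {m x y : ℕ}

theorem pair_sublist_stackSort_left_of_mem (hL : ∀ z ∈ L, z < m) (hR : ∀ z ∈ R, z ≤ m)
    (hl : (L ++ m :: R).Nodup) (h : [x, y] <+ stackSort (L ++ m :: R)) (hy : y ∈ L) :
    [x, y] <+ stackSort L := by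
  rw [stackSort_append_cons hL hR, append_assoc] at h
  have hyR : y ∉ R := fun hyR => disjoint_of_nodup_append hl hy (mem_cons_of_mem m hyR)
  exact h.pair_of_append_of_notMem (by simp [mem_stackSort, hyR, (hL y hy).ne])

theorem mem_or_pair_sublist_stackSort_right_of_mem (hL : ∀ z ∈ L, z < m)
    (hR : ∀ z ∈ R, z ≤ m) (hl : (L ++ m :: R).Nodup) (h : [x, y] <+ stackSort (L ++ m :: R))
    (hy : y ∈ R) : x ∈ L ∨ [x, y] <+ stackSort R := by
  rw [stackSort_append_cons hL hR] at h
  have hym : y ≠ m := fun hym => (nodup_cons.1 (nodup_middle.1 hl)).1 (hym ▸ mem_append_right L hy)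
  have h' := h.pair_of_append_of_notMem (by simpa using hym)
  by_cases hx : x ∈ L
  · exact .inl hx
  · exact .inr (h'.of_cons_append_of_notMem (by simpa [mem_stackSort]))

end Split

theorem exists_lt_of_inversion_stackSort {l : List ℕ} (hl : l.Nodup) {c a : ℕ} (hac : a < c)
    (hca : [c, a] <+ stackSort l) :
    ∃ c', c < c' ∧ [c, c'] <+ l ∧ [c', a] <+ l ∧ ∀ b, [b, c] <+ stackSort l → [b, c'] <+ l := by
  induction l using stackSort_induction generalizing c a with
  | nil => simp [stackSort] at hca
  | split L m R hL hR ihL ihR =>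
    have hsubL : L <+ L ++ m :: R := sublist_append_left _ _
    have hsubR : R <+ L ++ m :: R := (sublist_cons_self m R).trans (sublist_append_right _ _)
    have hpair : ∀ {x y}, x ∈ L → y ∈ m :: R → [x, y] <+ L ++ m :: R := fun hx hy =>
      (singleton_sublist.2 hx).append (singleton_sublist.2 hy)
    have hcm : c ≤ m := by
      have hc : c ∈ L ++ m :: R := mem_stackSort.1 (hca.subset (by simp))
      simp only [mem_append, mem_cons] at hc
      rcases hc with hc | rfl | hc
      exacts [(hL c hc).le, le_rfl, hR c hc]
    have ha : a ∈ L ∨ a ∈ R := by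
      simpa [(hac.trans_le hcm).ne] using mem_stackSort.1 (hca.subset (by simp) : a ∈ _)
    rcases ha with haL | haR
    · have hcaL := pair_sublist_stackSort_left_of_mem hL hR hl hca haL
      have hcL : c ∈ L := mem_stackSort.1 (hcaL.subset (by simp))
      obtain ⟨c', hcc', hcc'L, hc'aL, hbL⟩ := ihL (hl.sublist hsubL) hac hcaL
      refine ⟨c', hcc', hcc'L.trans hsubL, hc'aL.trans hsubL, fun b hbc => ?_⟩
      exact (hbL b (pair_sublist_stackSort_left_of_mem hL hR hl hbc hcL)).trans hsubL
    rcases mem_or_pair_sublist_stackSort_right_of_mem hL hR hl hca haR with hcL | hcaR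
    -- `c` and `a` are separated by `m`, which therefore serves as `c'`.
    · refine ⟨m, hL c hcL, hpair hcL mem_cons_self,
        sublist_append_of_sublist_right (cons_sublist_cons.2 (singleton_sublist.2 haR)),
        fun b hbc => hpair ?_ mem_cons_self⟩
      exact mem_stackSort.1 ((pair_sublist_stackSort_left_of_mem hL hR hl hbc hcL).subset (by simp))
    · have hcR : c ∈ R := mem_stackSort.1 (hcaR.subset (by simp))
      obtain ⟨c', hcc', hcc'R, hc'aR, hbR⟩ := ihR (hl.sublist hsubR) hac hcaR
      refine ⟨c', hcc', hcc'R.trans hsubR, hc'aR.trans hsubR, fun b hbc => ?_⟩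
      rcases mem_or_pair_sublist_stackSort_right_of_mem hL hR hl hbc hcR with hbL | hbcR
      · exact hpair hbL (mem_cons_of_mem m (hc'aR.subset (by simp)))
      · exact (hbR b hbcR).trans hsubR

theorem stackSort_iterate_perm (k : ℕ) (l : List ℕ) : (stackSort^[k] l).Perm l := by
  induction k with
  | zero => rfl
  | succ k ih =>
    rw [Function.iterate_succ_apply']
    exact (stackSort_perm _).trans ih

/-- A forbidden pattern `(B, c, a)` of order `k` in which `c` precedes `a` also when `B = ∅`.
Occurrences `b, c, a` are recorded as `b` preceding `c`, which suffices in words without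
repeated letters (`List.Nodup.triple_sublist`). -/
def HasInvertedForbiddenPattern (l : List ℕ) (k : ℕ) : Prop :=
  ∃ (B : Finset ℕ) (c a : ℕ), B.card = k ∧ a < c ∧ [c, a] <+ l ∧
    ∀ b ∈ B, a < b ∧ b < c ∧ [b, c] <+ l

namespace HasInvertedForbiddenPattern

variable {l : List ℕ} {k : ℕ}

theorem hasForbiddenPattern (hl : l.Nodup) (h : HasInvertedForbiddenPattern l k) :
    HasForbiddenPattern l k := by
  obtain ⟨B, c, a, hcard, -, hca, hB⟩ := h
  refine ⟨B, c, a, hcard, fun b hb => (hB b hb).2.2.subset (by simp), hca.subset (by simp),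
    hca.subset (by simp), fun b hb => ⟨(hB b hb).1, (hB b hb).2.1, ?_⟩⟩
  exact hl.triple_sublist (hB b hb).2.2 hca

theorem of_stackSort (hl : l.Nodup) (h : HasInvertedForbiddenPattern (stackSort l) k) :
    HasInvertedForbiddenPattern l (k + 1) := by
  obtain ⟨B, c, a, hcard, hac, hca, hB⟩ := h
  obtain ⟨c', hcc', hcc'l, hc'al, hBl⟩ := exists_lt_of_inversion_stackSort hl hac hca
  refine ⟨insert c B, c', a, ?_, hac.trans hcc', hc'al, fun b hb => ?_⟩
  · rw [Finset.card_insert_of_notMem fun hc => (hB c hc).2.1.false, hcard]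
  · rcases Finset.mem_insert.1 hb with rfl | hb
    · exact ⟨hac, hcc', hcc'l⟩
    · exact ⟨(hB b hb).1, (hB b hb).2.1.trans hcc', hBl b (hB b hb).2.2⟩

theorem of_iterate_stackSort (hl : l.Nodup)
    (h : HasInvertedForbiddenPattern (stackSort^[k] l) 0) : HasInvertedForbiddenPattern l k := by
  induction k generalizing l with
  | zero => exact h
  | succ k ih =>
    rw [Function.iterate_succ_apply] at h
    exact of_stackSort hl (ih ((stackSort_perm l).nodup_iff.2 hl) h)

theorem zero_of_perm {l' : List ℕ} (hp : l.Perm l') (hs : l'.Pairwise (· ≤ ·)) (hne : l ≠ l') :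
    HasInvertedForbiddenPattern l 0 := by
  by_contra hinv
  refine hne (hp.eq_of_pairwise' (pairwise_iff_forall_sublist.2 fun {x y} hxy => ?_) hs)
  by_contra hyx
  exact hinv ⟨∅, x, y, rfl, not_le.1 hyx, hxy, by simp⟩

end HasInvertedForbiddenPattern

/-- If a permutation `π` of `{1,…,n}` contains no forbidden pattern of order
`k`, then `ssc(π) ≤ k`. -/
theorem ssc_le_of_no_forbidden_pattern (n k : ℕ) (π : List ℕ) (hπ : IsPermWord n π)
    (h : ¬ HasForbiddenPattern π k) : ssc π ≤ k := by
  have hnd : π.Nodup := hπ.nodup_iff.2 nodup_range'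
  have hπ' : π.Perm (range' 1 π.length) := by rwa [hπ.length_eq, length_range']
  refine Nat.sInf_le (by_contra fun hne => h ?_)
  have hinv := HasInvertedForbiddenPattern.zero_of_perm
    ((stackSort_iterate_perm k π).trans hπ') pairwise_le_range' hne
  exact (hinv.of_iterate_stackSort hnd).hasForbiddenPattern hnd
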